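/- arXiv:2111.09382 — 4 statements merged into one kernel-verified Lean document; each statement's English description precedes it below -/
import Mathlib

section
/- Suppose D ⊆ ℝⁿ with 0 ∈ D, V : D → ℝ is continuously differentiable, and S ⊆ D is a compact invariant set of the ODE whose interior contains the origin, such that ∇V(x)ᵀ f(x) ≤ 0 for all x ∈ S. Define E := {x ∈ S : ∇V(x)ᵀ f(x) = 0}. Suppose further that V(0) = 0, V(x) > 0 for all x ∈ D \ {0}, and the only point x ∈ S satisfying φ(x,t) ∈ E for all t ≥ 0 is x = 0. Then the origin is asymptotically stable: for each ε > 0 there exists δ > 0 such that ‖φ(x,t)‖₂ < ε for all x with ‖x‖₂ < δ and all t ≥ 0, and there exists δ₀ > 0 such that lim_{t→∞} ‖φ(x,t)‖₂ = 0 for all x with ‖x‖₂ < δ₀. -/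
open Filter Metric Set
open scoped Topology

/-- The derivative of `V` along the vector field `f` at `x`, i.e. `∇V(x)ᵀ f(x)`. -/
noncomputable def lieDeriv {n : ℕ} (V : EuclideanSpace ℝ (Fin n) → ℝ)
    (f : EuclideanSpace ℝ (Fin n) → EuclideanSpace ℝ (Fin n))
    (x : EuclideanSpace ℝ (Fin n)) : ℝ :=
  inner ℝ (gradient V x) (f x)

/-!
Fix a closed ball `K` around the origin inside `interior S`. There `V` decreases along
trajectories, and on the bounding sphere it is at least some `m > 0`; a trajectory starting where
`V < m` can therefore never reach the sphere, which gives stability. Along such a trajectory `V` is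
nonincreasing, so it takes a single value on the ω-limit set, a subset of `K` invariant under the
flow. Hence `∇V ⬝ f` vanishes along every trajectory starting in the ω-limit set, which forces
that set to be `{0}`; by compactness of `K` the trajectory converges to `0`.
-/

theorem exists_mem_Icc_eq_forall_le {g : ℝ → ℝ} {a b c : ℝ} (hab : a ≤ b)
    (hg : ContinuousOn g (Icc a b)) (ha : g a ≤ c) (hb : c ≤ g b) :
    ∃ t₀ ∈ Icc a b, g t₀ = c ∧ ∀ s ∈ Icc a t₀, g s ≤ c := by
  set A := Icc a b ∩ g ⁻¹' {c}
  have hA : IsClosed A := hg.preimage_isClosed_of_isClosed isClosed_Icc isClosed_singleton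
  have hne : A.Nonempty := intermediate_value_Icc hab hg ⟨ha, hb⟩
  have hbdd : BddBelow A := bddBelow_Icc.mono inter_subset_left
  obtain ⟨hmem, heq⟩ := hA.csInf_mem hne hbdd
  refine ⟨sInf A, hmem, heq, fun s hs => le_of_not_gt fun hlt => ?_⟩
  have hsb : s ≤ b := hs.2.trans hmem.2
  obtain ⟨s', hs', hgs'⟩ := intermediate_value_Icc hs.1
    (hg.mono (Icc_subset_Icc le_rfl hsb)) ⟨ha, hlt.le⟩
  have hs's : sInf A ≤ s' := csInf_le hbdd ⟨⟨hs'.1, hs'.2.trans hsb⟩, hgs'⟩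
  have hs_eq : s = sInf A := le_antisymm hs.2 (hs's.trans hs'.2)
  rw [hs_eq, heq] at hlt
  exact lt_irrefl c hlt

theorem AntitoneOn.eq_of_mapClusterPt {α β : Type*} [Preorder α] [PartialOrder β]
    [TopologicalSpace β] [OrderClosedTopology β] {g : α → β} {a : α} (hg : AntitoneOn g (Ici a))
    {y y' : β} (hy : MapClusterPt y atTop g) (hy' : MapClusterPt y' atTop g) : y = y' := by
  suffices key : ∀ y y', MapClusterPt y atTop g → MapClusterPt y' atTop g → y ≤ y' from
    le_antisymm (key y y' hy hy') (key y' y hy' hy)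
  intro y y' hy hy'
  have hlower : ∀ t ∈ Ici a, y ≤ g t := fun t ht =>
    isClosed_Iic.mem_of_mapClusterPt hy
      ((eventually_ge_atTop t).mono fun u hu => hg ht (mem_Ici.2 (le_trans ht hu)) hu)
  exact isClosed_Ici.mem_of_mapClusterPt hy' ((eventually_ge_atTop a).mono hlower)

theorem MapClusterPt.apply_of_semigroup {X : Type*} [TopologicalSpace X] {φ : X → ℝ → X}
    {x p : X} {s : ℝ} (hp : MapClusterPt p atTop (φ x)) (hcont : ContinuousAt (fun y => φ y s) p)
    (hsemi : ∀ t, 0 ≤ t → φ (φ x t) s = φ x (t + s)) : MapClusterPt (φ p s) atTop (φ x) := by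
  have hshift : (fun y => φ y s) ∘ φ x =ᶠ[atTop] φ x ∘ (· + s) :=
    (eventually_ge_atTop 0).mono hsemi
  have hcomp : MapClusterPt (φ p s) atTop (φ x ∘ (· + s)) := by
    rw [MapClusterPt, ← map_congr hshift]
    exact hp.continuousAt_comp hcont
  exact hcomp.of_comp (tendsto_atTop_add_const_right _ s tendsto_id)

theorem continuous_apply_of_continuousOn_uncurry {X Y : Type*} [TopologicalSpace X]
    [TopologicalSpace Y] {φ : X → ℝ → Y}
    (h : ContinuousOn (fun p : X × ℝ => φ p.1 p.2) (univ ×ˢ Ici 0)) {s : ℝ} (hs : 0 ≤ s) :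
    Continuous fun x => φ x s :=
  continuousOn_univ.1 <|
    h.comp (continuous_id.prodMk continuous_const).continuousOn fun _ _ => ⟨trivial, hs⟩

section Lyapunov

variable {n : ℕ} {f : EuclideanSpace ℝ (Fin n) → EuclideanSpace ℝ (Fin n)}
  {V : EuclideanSpace ℝ (Fin n) → ℝ} {U : Set (EuclideanSpace ℝ (Fin n))}
  {γ : ℝ → EuclideanSpace ℝ (Fin n)}

theorem DifferentiableAt.hasDerivWithinAt_lieDeriv_comp {s : Set ℝ} {t : ℝ}
    (hV : DifferentiableAt ℝ V (γ t)) (hγ : HasDerivWithinAt γ (f (γ t)) s t) :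
    HasDerivWithinAt (fun τ => V (γ τ)) (lieDeriv V f (γ t)) s t := by
  have h : HasDerivWithinAt (fun τ => V (γ τ)) (fderiv ℝ V (γ t) (f (γ t))) s t :=
    hV.hasFDerivAt.comp_hasDerivWithinAt t hγ
  simpa only [lieDeriv, gradient, InnerProductSpace.toDual_symm_apply] using h

theorem antitoneOn_comp_of_lieDeriv_nonpos {I : Set ℝ}
    (hγ : ∀ t, 0 ≤ t → HasDerivWithinAt γ (f (γ t)) (Ici 0) t) (hU : IsOpen U)
    (hV : DifferentiableOn ℝ V U) (hdec : ∀ y ∈ U, lieDeriv V f y ≤ 0) (hI : Convex ℝ I)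
    (hI0 : I ⊆ Ici 0) (hγI : MapsTo γ I U) : AntitoneOn (fun t => V (γ t)) I := by
  have hderiv : ∀ t ∈ I, HasDerivWithinAt (fun τ => V (γ τ)) (lieDeriv V f (γ t)) I t :=
    fun t ht => ((hV.differentiableAt (hU.mem_nhds (hγI ht))).hasDerivWithinAt_lieDeriv_comp
      (hγ t (hI0 ht))).mono hI0
  exact antitoneOn_of_hasDerivWithinAt_nonpos hI (fun t ht => (hderiv t ht).continuousWithinAt)
    (fun t ht => (hderiv t (interior_subset ht)).mono interior_subset)
    (fun t ht => hdec _ (hγI (interior_subset ht)))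

theorem mem_closedBall_of_lieDeriv_nonpos {a : EuclideanSpace ℝ (Fin n)} {ε m t : ℝ}
    (hγ : ∀ t, 0 ≤ t → HasDerivWithinAt γ (f (γ t)) (Ici 0) t) (hU : IsOpen U)
    (hV : DifferentiableOn ℝ V U) (hdec : ∀ y ∈ U, lieDeriv V f y ≤ 0)
    (hεU : closedBall a ε ⊆ U) (hm : ∀ y ∈ sphere a ε, m ≤ V y) (h0 : γ 0 ∈ closedBall a ε)
    (hV0 : V (γ 0) < m) (ht : 0 ≤ t) : γ t ∈ closedBall a ε := by
  by_contra hout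
  rw [mem_closedBall, not_le] at hout
  have hcont : ContinuousOn (fun s => dist (γ s) a) (Icc 0 t) :=
    (fun s hs => ((hγ s hs.1).continuousWithinAt.mono Icc_subset_Ici_self).dist
      continuousWithinAt_const)
  obtain ⟨t₀, ht₀, hdist, hinside⟩ := exists_mem_Icc_eq_forall_le ht hcont h0 hout.le
  have hanti := antitoneOn_comp_of_lieDeriv_nonpos hγ hU hV hdec (convex_Icc 0 t₀)
    Icc_subset_Ici_self fun s hs => hεU (hinside s hs)
  have hdecay : V (γ t₀) ≤ V (γ 0) :=
    hanti (left_mem_Icc.2 ht₀.1) (right_mem_Icc.2 ht₀.1) ht₀.1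
  have hsphere : m ≤ V (γ t₀) := hm _ hdist
  linarith

theorem exists_pos_forall_flow_mem_closedBall
    {φ : EuclideanSpace ℝ (Fin n) → ℝ → EuclideanSpace ℝ (Fin n)} {a : EuclideanSpace ℝ (Fin n)}
    {ε : ℝ}
    (hφd : ∀ x t, 0 ≤ t → HasDerivWithinAt (φ x) (f (φ x t)) (Ici 0) t)
    (hφ0 : ∀ x, φ x 0 = x) (hU : IsOpen U) (hV : DifferentiableOn ℝ V U)
    (hdec : ∀ y ∈ U, lieDeriv V f y ≤ 0) (hVa : V a = 0) (hVpos : ∀ y ∈ U, y ≠ a → 0 < V y)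
    (hε : 0 < ε) (hεU : closedBall a ε ⊆ U) :
    ∃ δ > 0, ∀ x, dist x a < δ → ∀ t, 0 ≤ t → φ x t ∈ closedBall a ε := by
  have hsphereU : sphere a ε ⊆ U := sphere_subset_closedBall.trans hεU
  obtain ⟨m, hm0, hm⟩ := (isCompact_sphere a ε).exists_forall_le'
    (hV.continuousOn.mono hsphereU) fun y hy => hVpos y (hsphereU hy) (ne_of_mem_sphere hy hε.ne')
  have hVcont : ContinuousAt V a :=
    (hV.differentiableAt (hU.mem_nhds (hεU (mem_closedBall_self hε.le)))).continuousAt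
  obtain ⟨δ, hδ, hδV⟩ :=
    Metric.eventually_nhds_iff.1 (hVcont.eventually (gt_mem_nhds (hVa.symm ▸ hm0)))
  refine ⟨min δ ε, lt_min hδ hε, fun x hx t ht => ?_⟩
  refine mem_closedBall_of_lieDeriv_nonpos (hφd x) hU hV hdec hεU hm ?_ ?_ ht <;> rw [hφ0]
  · exact (hx.trans_le (min_le_right δ ε)).le
  · exact hδV (hx.trans_le (min_le_left δ ε))

theorem tendsto_flow_of_isCompact_of_lieDeriv_nonpos
    {φ : EuclideanSpace ℝ (Fin n) → ℝ → EuclideanSpace ℝ (Fin n)}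
    {K : Set (EuclideanSpace ℝ (Fin n))} {x a : EuclideanSpace ℝ (Fin n)}
    (hφd : ∀ x t, 0 ≤ t → HasDerivWithinAt (φ x) (f (φ x t)) (Ici 0) t)
    (hφc : ∀ s, 0 ≤ s → Continuous fun y => φ y s)
    (hsemi : ∀ x t s, 0 ≤ t → 0 ≤ s → φ (φ x t) s = φ x (t + s))
    (hU : IsOpen U) (hV : DifferentiableOn ℝ V U) (hdec : ∀ y ∈ U, lieDeriv V f y ≤ 0)
    (hK : IsCompact K) (hKU : K ⊆ U) (hxK : ∀ t, 0 ≤ t → φ x t ∈ K)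
    (hunique : ∀ p ∈ K, (∀ t, 0 ≤ t → φ p t ∈ K ∧ lieDeriv V f (φ p t) = 0) → p = a) :
    Tendsto (φ x) atTop (𝓝 a) := by
  have hxK' : ∀ᶠ t in atTop, φ x t ∈ K := (eventually_ge_atTop 0).mono hxK
  have hanti : AntitoneOn (fun t => V (φ x t)) (Ici 0) :=
    antitoneOn_comp_of_lieDeriv_nonpos (hφd x) hU hV hdec (convex_Ici 0) subset_rfl
      fun t ht => hKU (hxK t ht)
  have hωK : ∀ q, MapClusterPt q atTop (φ x) → q ∈ K := fun q hq =>
    hK.isClosed.mem_of_mapClusterPt hq hxK'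
  have hωinv : ∀ q, MapClusterPt q atTop (φ x) → ∀ s, 0 ≤ s → MapClusterPt (φ q s) atTop (φ x) :=
    fun q hq s hs => hq.apply_of_semigroup (hφc s hs).continuousAt fun t ht => hsemi x t s ht hs
  have hVdiff : ∀ q ∈ K, DifferentiableAt ℝ V q := fun q hq =>
    hV.differentiableAt (hU.mem_nhds (hKU hq))
  have hωV : ∀ q q', MapClusterPt q atTop (φ x) → MapClusterPt q' atTop (φ x) → V q = V q' :=
    fun q q' hq hq' => hanti.eq_of_mapClusterPt
      (hq.continuousAt_comp (hVdiff q (hωK q hq)).continuousAt)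
      (hq'.continuousAt_comp (hVdiff q' (hωK q' hq')).continuousAt)
  refine hK.tendsto_nhds_of_unique_mapClusterPt hxK' fun p _ hp =>
    hunique p (hωK p hp) fun t ht => ⟨hωK _ (hωinv p hp t ht), ?_⟩
  have hconst : HasDerivWithinAt (fun s => V (φ p s)) 0 (Ici 0) t :=
    (hasDerivWithinAt_const t _ (V (φ p t))).congr
      (fun s hs => hωV _ _ (hωinv p hp s hs) (hωinv p hp t ht)) rfl
  exact (uniqueDiffOn_Ici 0 t ht).eq_deriv _
    ((hVdiff _ (hωK _ (hωinv p hp t ht))).hasDerivWithinAt_lieDeriv_comp (hφd p t ht)) hconst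

end Lyapunov

theorem lasalle_asymptotic_stability_general {n : ℕ}
    (f : EuclideanSpace ℝ (Fin n) → EuclideanSpace ℝ (Fin n))
    (φ : EuclideanSpace ℝ (Fin n) → ℝ → EuclideanSpace ℝ (Fin n))
    (hφ0 : ∀ x, φ x 0 = x)
    (hφC : ContDiffOn ℝ 1 (fun p : EuclideanSpace ℝ (Fin n) × ℝ => φ p.1 p.2)
      (Set.univ ×ˢ Set.Ici (0 : ℝ)))
    (hφd : ∀ x t, 0 ≤ t → HasDerivWithinAt (φ x) (f (φ x t)) (Set.Ici 0) t)
    (hsemi : ∀ x t s, 0 ≤ t → 0 ≤ s → φ (φ x t) s = φ x (t + s))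
    (D S : Set (EuclideanSpace ℝ (Fin n)))
    (V : EuclideanSpace ℝ (Fin n) → ℝ)
    (hV : ContDiffOn ℝ 1 V D)
    (hSD : S ⊆ D)
    (h0S : (0 : EuclideanSpace ℝ (Fin n)) ∈ interior S)
    (hdec : ∀ x ∈ S, lieDeriv V f x ≤ 0)
    (hV0 : V 0 = 0)
    (hVpos : ∀ x ∈ D \ {0}, 0 < V x)
    (hE : ∀ x ∈ S, (∀ t, 0 ≤ t → φ x t ∈ {y ∈ S | lieDeriv V f y = 0}) ↔ x = 0) :
    (∀ ε > 0, ∃ δ > 0, ∀ x : EuclideanSpace ℝ (Fin n), ‖x‖ < δ →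
        ∀ t, 0 ≤ t → ‖φ x t‖ < ε) ∧
    (∃ δ₀ > 0, ∀ x : EuclideanSpace ℝ (Fin n), ‖x‖ < δ₀ →
        Tendsto (fun t => ‖φ x t‖) atTop (𝓝 0)) := by
  obtain ⟨r, hr, hball⟩ := Metric.isOpen_iff.1 isOpen_interior 0 h0S
  have hVU : DifferentiableOn ℝ V (interior S) :=
    (hV.differentiableOn one_ne_zero).mono (interior_subset.trans hSD)
  have hdecU : ∀ y ∈ interior S, lieDeriv V f y ≤ 0 := fun y hy => hdec y (interior_subset hy)
  have hVposU : ∀ y ∈ interior S, y ≠ 0 → 0 < V y := fun y hy hy0 =>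
    hVpos y ⟨hSD (interior_subset hy), hy0⟩
  have hstay : ∀ ε, 0 < ε → ε < r →
      ∃ δ > 0, ∀ x, dist x 0 < δ → ∀ t, 0 ≤ t → φ x t ∈ closedBall 0 ε := fun ε hε hεr =>
    exists_pos_forall_flow_mem_closedBall hφd hφ0 isOpen_interior hVU hdecU hV0 hVposU hε
      ((closedBall_subset_ball hεr).trans hball)
  refine ⟨fun ε hε => ?_, ?_⟩
  · obtain ⟨δ, hδ, hδx⟩ := hstay (min (ε / 2) (r / 2)) (by positivity)
      ((min_le_right _ _).trans_lt (half_lt_self hr))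
    refine ⟨δ, hδ, fun x hx t ht => ?_⟩
    have hφx := mem_closedBall_zero_iff.1 (hδx x (by rwa [dist_zero_right]) t ht)
    linarith [min_le_left (ε / 2) (r / 2)]
  · obtain ⟨δ, hδ, hδx⟩ := hstay (r / 2) (half_pos hr) (half_lt_self hr)
    have hKS : closedBall (0 : EuclideanSpace ℝ (Fin n)) (r / 2) ⊆ interior S :=
      (closedBall_subset_ball (half_lt_self hr)).trans hball
    refine ⟨δ, hδ, fun x hx => tendsto_zero_iff_norm_tendsto_zero.1 ?_⟩
    refine tendsto_flow_of_isCompact_of_lieDeriv_nonpos hφd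
      (fun s hs => continuous_apply_of_continuousOn_uncurry hφC.continuousOn hs) hsemi
      isOpen_interior hVU hdecU (isCompact_closedBall 0 (r / 2)) hKS
      (hδx x (by rwa [dist_zero_right])) fun p hp hpE => (hE p (interior_subset (hKS hp))).1
        fun t ht => ⟨interior_subset (hKS (hpE t ht).1), (hpE t ht).2⟩

/-- LaSalle: if additionally `V(0) = 0`, `V > 0` on `D \ {0}`, the origin lies in the
interior of `S`, and the only complete trajectory inside `E` is the origin, then the origin
is asymptotically stable. -/
theorem lasalle_asymptotic_stability {n : ℕ}
    (f : EuclideanSpace ℝ (Fin n) → EuclideanSpace ℝ (Fin n))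
    (hf : ContDiff ℝ 1 f) (hf0 : f 0 = 0)
    (φ : EuclideanSpace ℝ (Fin n) → ℝ → EuclideanSpace ℝ (Fin n))
    (hφ0 : ∀ x, φ x 0 = x)
    (hφC : ContDiffOn ℝ 1 (fun p : EuclideanSpace ℝ (Fin n) × ℝ => φ p.1 p.2)
      (Set.univ ×ˢ Set.Ici (0 : ℝ)))
    (hφd : ∀ x t, 0 ≤ t → HasDerivWithinAt (φ x) (f (φ x t)) (Set.Ici 0) t)
    (hsemi : ∀ x t s, 0 ≤ t → 0 ≤ s → φ (φ x t) s = φ x (t + s))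
    (D S : Set (EuclideanSpace ℝ (Fin n)))
    (V : EuclideanSpace ℝ (Fin n) → ℝ)
    (hV : ContDiffOn ℝ 1 V D)
    (h0D : (0 : EuclideanSpace ℝ (Fin n)) ∈ D)
    (hSD : S ⊆ D) (hScomp : IsCompact S)
    (h0S : (0 : EuclideanSpace ℝ (Fin n)) ∈ interior S)
    (hSinv : ∀ x ∈ S, ∀ t, 0 ≤ t → φ x t ∈ S)
    (hdec : ∀ x ∈ S, lieDeriv V f x ≤ 0)
    (hV0 : V 0 = 0)
    (hVpos : ∀ x ∈ D \ {0}, 0 < V x)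
    (hE : ∀ x ∈ S, (∀ t, 0 ≤ t → φ x t ∈ {y ∈ S | lieDeriv V f y = 0}) ↔ x = 0) :
    (∀ ε > 0, ∃ δ > 0, ∀ x : EuclideanSpace ℝ (Fin n), ‖x‖ < δ →
        ∀ t, 0 ≤ t → ‖φ x t‖ < ε) ∧
    (∃ δ₀ > 0, ∀ x : EuclideanSpace ℝ (Fin n), ‖x‖ < δ₀ →
        Tendsto (fun t => ‖φ x t‖) atTop (𝓝 0)) :=
  lasalle_asymptotic_stability_general f φ hφ0 hφC hφd hsemi D S V hV hSD h0S hdec hV0 hVpos hE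
end

section
/- Let γ₁ ∈ ℝ, let ρ : ℝ → ℝ be defined by ρ(x) = exp(−1/(γ₁ − x)²) for x > γ₁ and ρ(x) = 0 for x ≤ γ₁, let D ⊆ ℝⁿ, let f : ℝⁿ → ℝⁿ, and let V : ℝⁿ → ℝ be continuously differentiable. Suppose that ∇V(x)ᵀ f(x) < 0 for every x ∈ D with V(x) > γ₁. Setting Ṽ := ρ ∘ V, it holds that {x ∈ D : ∇Ṽ(x)ᵀ f(x) = 0} = {x ∈ D : V(x) ≤ γ₁}. -/
/-!
The chain rule gives `∇Ṽ(x) = ρ'(V x) • ∇V(x)`. The function `ρ` is flat at `γ₁`, since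
`exp (-1 / t²) ≤ t²`, so `ρ' = 0` on `(-∞, γ₁]`, while `ρ' > 0` on `(γ₁, ∞)`. Hence
`∇Ṽ(x)ᵀ f(x)` vanishes where `V x ≤ γ₁`, and elsewhere on `D` it is the product of a positive
and a negative number.
-/

open Real Asymptotics Filter Topology

theorem HasDerivAt.comp_hasGradientAt {F : Type*} [NormedAddCommGroup F] [InnerProductSpace ℝ F]
    [CompleteSpace F] {ρ : ℝ → ℝ} {V : F → ℝ} {x g : F} {c : ℝ}
    (hρ : HasDerivAt ρ c (V x)) (hV : HasGradientAt V g x) :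
    HasGradientAt (fun y => ρ (V y)) (c • g) x := by
  rw [hasGradientAt_iff_hasFDerivAt, map_smul]
  exact hρ.comp_hasFDerivAt x hV.hasFDerivAt

noncomputable def flatStep (γ s : ℝ) : ℝ := if γ < s then exp (-1 / (γ - s) ^ 2) else 0

lemma exp_neg_inv_sq_le_sq {t : ℝ} (ht : t ≠ 0) : exp (-1 / t ^ 2) ≤ t ^ 2 := by
  have ht2 : 0 < t ^ 2 := by positivity
  rw [neg_div, exp_neg, inv_le_comm₀ (exp_pos _) ht2, ← one_div]
  linarith [add_one_le_exp (1 / t ^ 2)]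

lemma flatStep_le_sq_of_le {γ s : ℝ} (hs : s ≤ γ) (t : ℝ) : |flatStep γ t| ≤ (t - s) ^ 2 := by
  unfold flatStep
  split_ifs with ht
  · rw [abs_of_pos (exp_pos _)]
    calc exp (-1 / (γ - t) ^ 2) ≤ (γ - t) ^ 2 := exp_neg_inv_sq_le_sq (by linarith)
      _ ≤ (t - s) ^ 2 := by nlinarith
  · rw [abs_zero]; positivity

lemma hasDerivAt_flatStep_of_le {γ s : ℝ} (hs : s ≤ γ) : HasDerivAt (flatStep γ) 0 s := by
  have hO : flatStep γ =O[𝓝 s] fun t => ‖t - s‖ ^ 2 :=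
    IsBigO.of_bound' (Eventually.of_forall fun t => by
      simpa [Real.norm_eq_abs, sq_abs] using flatStep_le_sq_of_le hs t)
  simpa using (hO.hasFDerivAt (𝕜 := ℝ) one_lt_two).hasDerivAt

lemma hasDerivAt_flatStep_of_lt {γ s : ℝ} (hs : γ < s) :
    HasDerivAt (flatStep γ) (exp (-1 / (γ - s) ^ 2) * (2 / (s - γ) ^ 3)) s := by
  have h := (((hasDerivAt_id s).const_sub γ).pow 2).inv (pow_ne_zero 2 (sub_neg.2 hs).ne)
    |>.neg |>.exp
  have heq : flatStep γ =ᶠ[𝓝 s] fun t => exp (-((γ - t) ^ 2)⁻¹) := by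
    filter_upwards [eventually_gt_nhds hs] with t ht
    simp [flatStep, ht, neg_div]
  refine (h.congr_of_eventuallyEq heq).congr_deriv ?_
  simp only [Pi.neg_apply, Pi.inv_apply, Pi.pow_apply, id]
  field_simp [(sub_pos.2 hs).ne', (sub_neg.2 hs).ne]
  ring

/-- For `Ṽ = ρ ∘ V`, where `ρ(x) = exp(−1/(γ₁ − x)²)` for `x > γ₁` and `ρ(x) = 0` for
`x ≤ γ₁`: if `∇V(x)ᵀ f(x) < 0` whenever `x ∈ D` and `V(x) > γ₁`, then
`{x ∈ D : ∇Ṽ(x)ᵀ f(x) = 0} = {x ∈ D : V(x) ≤ γ₁}`. -/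
theorem rho_composition_zero_set {n : ℕ} (γ₁ : ℝ)
    (ρ : ℝ → ℝ)
    (hρ : ρ = fun s : ℝ => if γ₁ < s then Real.exp (-1 / (γ₁ - s) ^ 2) else 0)
    (D : Set (EuclideanSpace ℝ (Fin n)))
    (f : EuclideanSpace ℝ (Fin n) → EuclideanSpace ℝ (Fin n))
    (V : EuclideanSpace ℝ (Fin n) → ℝ)
    (hV : ContDiff ℝ 1 V)
    (hdec : ∀ x ∈ D, γ₁ < V x → (inner ℝ (gradient V x) (f x) : ℝ) < 0) :
    {x ∈ D | (inner ℝ (gradient (fun y => ρ (V y)) x) (f x) : ℝ) = 0} =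
      {x ∈ D | V x ≤ γ₁} := by
  obtain rfl : ρ = flatStep γ₁ := hρ
  ext x
  have hVx : HasGradientAt V (gradient V x) x :=
    ((hV.differentiable one_ne_zero) x).hasGradientAt
  refine and_congr_right fun hxD => ⟨fun hzero => not_lt.1 fun hlt => ?_, fun hle => ?_⟩
  · rw [((hasDerivAt_flatStep_of_lt hlt).comp_hasGradientAt hVx).gradient,
      real_inner_smul_left] at hzero
    have hρ' : 0 < exp (-1 / (γ₁ - V x) ^ 2) * (2 / (V x - γ₁) ^ 3) := by
      have := sub_pos.2 hlt
      positivity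
    exact mul_ne_zero hρ'.ne' (hdec x hxD hlt).ne hzero
  · rw [((hasDerivAt_flatStep_of_le hle).comp_hasGradientAt hVx).gradient,
      zero_smul, inner_zero_left]
end

section
/- Let D ⊆ ℝⁿ be compact, let V : ℝⁿ → ℝ be continuously differentiable, and let γ₁ < γ₂ be real numbers such that {y ∈ D : V(y) ≤ γ₂} is contained in the interior of D and ∇V(x)ᵀ f(x) < 0 for every x ∈ D with V(x) > γ₁. Then the set S := {y ∈ D : V(y) ≤ γ₂} is an invariant set of the ODE, i.e., φ(x,t) ∈ S for all x ∈ S and t ≥ 0. -/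
/-! A trajectory starting in `S = {y ∈ D | V y ≤ γ₂}` cannot leave it. Just after any time it
spends in `S` it is still in `D`, since it sits in the interior of `D`, and still below the
level `γ₂`: by continuity if `V < γ₂` there, and if `V = γ₂ > γ₁` because the derivative of `V`
along the trajectory is negative. So the set of times spent in `S` is closed and open to the right,
and real induction fills up `[0, ∞)`. -/

open Filter Metric Set
open scoped Topology

theorem IsClosed.mapsTo_Ici_of_forall_eventually_mem {α X : Type*}
    [ConditionallyCompleteLinearOrder α] [TopologicalSpace α] [OrderTopology α]
    [DenselyOrdered α] [TopologicalSpace X] {c : α → X} {S : Set X} {a : α}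
    (hS : IsClosed S) (hc : ContinuousOn c (Ici a)) (ha : c a ∈ S)
    (hstep : ∀ u, a ≤ u → c u ∈ S → ∀ᶠ z in 𝓝[>] u, c z ∈ S) :
    MapsTo c (Ici a) S := by
  intro t ht
  have hclosed : IsClosed (Ici a ∩ c ⁻¹' S) := hc.preimage_isClosed_of_isClosed isClosed_Ici hS
  have hIcc : Icc a t ⊆ Ici a ∩ c ⁻¹' S := by
    refine (hclosed.inter isClosed_Icc).Icc_subset_of_forall_mem_nhdsWithin ⟨le_rfl, ha⟩ ?_
    rintro u ⟨⟨hau, hu⟩, -⟩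
    exact inter_mem (mem_of_superset self_mem_nhdsWithin fun z hz ↦ hau.trans (le_of_lt hz))
      (hstep u hau hu)
  exact (hIcc ⟨ht, le_rfl⟩).2

theorem HasDerivWithinAt.eventually_nhdsGT_lt {g : ℝ → ℝ} {g' u : ℝ}
    (hg : HasDerivWithinAt g g' (Ioi u) u) (hg' : g' < 0) : ∀ᶠ z in 𝓝[>] u, g z < g u := by
  filter_upwards [hg.limsup_slope_le' (lt_irrefl u) hg', self_mem_nhdsWithin] with z hslope hz
  exact (slope_neg_iff_of_le (le_of_lt hz)).1 hslope

theorem HasDerivWithinAt.eventually_nhdsGT_le {g : ℝ → ℝ} {g' u γ : ℝ}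
    (hg : HasDerivWithinAt g g' (Ioi u) u) (hle : g u ≤ γ) (hdec : g u = γ → g' < 0) :
    ∀ᶠ z in 𝓝[>] u, g z ≤ γ := by
  rcases hle.lt_or_eq with hlt | heq
  · exact (hg.continuousWithinAt.eventually_mem (Iio_mem_nhds hlt)).mono fun _ hz ↦ le_of_lt hz
  · exact (hg.eventually_nhdsGT_lt (hdec heq)).mono fun _ hz ↦ heq ▸ le_of_lt hz

theorem DifferentiableAt.hasDerivWithinAt_comp_lieDeriv {n : ℕ}
    {V : EuclideanSpace ℝ (Fin n) → ℝ}
    {f : EuclideanSpace ℝ (Fin n) → EuclideanSpace ℝ (Fin n)}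
    {c : ℝ → EuclideanSpace ℝ (Fin n)} {s : Set ℝ} {t : ℝ}
    (hV : DifferentiableAt ℝ V (c t)) (hc : HasDerivWithinAt c (f (c t)) s t) :
    HasDerivWithinAt (fun z ↦ V (c z)) (lieDeriv V f (c t)) s t :=
  hV.hasGradientAt.hasFDerivAt.comp_hasDerivWithinAt t hc

theorem sublevel_invariant_general {n : ℕ}
    (f : EuclideanSpace ℝ (Fin n) → EuclideanSpace ℝ (Fin n))
    (φ : EuclideanSpace ℝ (Fin n) → ℝ → EuclideanSpace ℝ (Fin n))
    (hφ0 : ∀ x, φ x 0 = x)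
    (hφd : ∀ x t, 0 ≤ t → HasDerivWithinAt (φ x) (f (φ x t)) (Set.Ici 0) t)
    (D : Set (EuclideanSpace ℝ (Fin n))) (hD : IsCompact D)
    (V : EuclideanSpace ℝ (Fin n) → ℝ)
    (hV : ContDiff ℝ 1 V)
    (γ₁ γ₂ : ℝ) (hγ : γ₁ < γ₂)
    (hsub : {y ∈ D | V y ≤ γ₂} ⊆ interior D)
    (hdec : ∀ x ∈ D, γ₁ < V x → lieDeriv V f x < 0) :
    ∀ x ∈ {y ∈ D | V y ≤ γ₂}, ∀ t, 0 ≤ t → φ x t ∈ {y ∈ D | V y ≤ γ₂} := by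
  intro x hx t ht
  have hS : IsClosed {y ∈ D | V y ≤ γ₂} :=
    hD.isClosed.inter (isClosed_le hV.continuous continuous_const)
  refine hS.mapsTo_Ici_of_forall_eventually_mem (fun u hu ↦ (hφd x u hu).continuousWithinAt)
    (by rwa [hφ0]) ?_ ht
  rintro u hu ⟨huD, huV⟩
  have hcurve : HasDerivWithinAt (φ x) (f (φ x u)) (Ioi u) u :=
    (hφd x u hu).mono fun z hz ↦ hu.trans (le_of_lt hz)
  have hVcurve := (hV.differentiable one_ne_zero _).hasDerivWithinAt_comp_lieDeriv hcurve
  have hint : φ x u ∈ interior D := hsub ⟨huD, huV⟩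
  filter_upwards [hcurve.continuousWithinAt.eventually_mem (isOpen_interior.mem_nhds hint),
    hVcurve.eventually_nhdsGT_le huV fun heq ↦ hdec _ huD (heq ▸ hγ)] with z hzD hzV
  exact ⟨interior_subset hzD, hzV⟩

/-- The sublevel set `S = {y ∈ D : V(y) ≤ γ₂}` is invariant when it is contained in the
interior of the compact set `D` and `V` is strictly decreasing along trajectories on
`{x ∈ D : V(x) > γ₁}`. -/
theorem sublevel_invariant {n : ℕ}
    (f : EuclideanSpace ℝ (Fin n) → EuclideanSpace ℝ (Fin n))
    (hf : ContDiff ℝ 1 f) (hf0 : f 0 = 0)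
    (φ : EuclideanSpace ℝ (Fin n) → ℝ → EuclideanSpace ℝ (Fin n))
    (hφ0 : ∀ x, φ x 0 = x)
    (hφC : ContDiffOn ℝ 1 (fun p : EuclideanSpace ℝ (Fin n) × ℝ => φ p.1 p.2)
      (Set.univ ×ˢ Set.Ici (0 : ℝ)))
    (hφd : ∀ x t, 0 ≤ t → HasDerivWithinAt (φ x) (f (φ x t)) (Set.Ici 0) t)
    (hsemi : ∀ x t s, 0 ≤ t → 0 ≤ s → φ (φ x t) s = φ x (t + s))
    (D : Set (EuclideanSpace ℝ (Fin n))) (hD : IsCompact D)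
    (V : EuclideanSpace ℝ (Fin n) → ℝ)
    (hV : ContDiff ℝ 1 V)
    (γ₁ γ₂ : ℝ) (hγ : γ₁ < γ₂)
    (hsub : {y ∈ D | V y ≤ γ₂} ⊆ interior D)
    (hdec : ∀ x ∈ D, γ₁ < V x → lieDeriv V f x < 0) :
    ∀ x ∈ {y ∈ D | V y ≤ γ₂}, ∀ t, 0 ≤ t → φ x t ∈ {y ∈ D | V y ≤ γ₂} :=
  sublevel_invariant_general f φ hφ0 hφd D hD V hV γ₁ γ₂ hγ hsub hdec
end

section
/- Let D ⊂ ℝⁿ be compact, let V : ℝⁿ → ℝ be continuously differentiable, and let γ₁ < γ₂ and η, ε, a > 0 be such that: (i) B_ε({y ∈ D : V(y) ≤ γ₁}) ⊂ B_η(0); (ii) {y ∈ D : V(y) ≤ γ₂} is contained in the interior of D; (iii) ∇V(x)ᵀ f(x) < −a < 0 for all x ∈ D with V(x) > γ₁. Then for every x ∈ {y ∈ D : V(y) ≤ γ₂} \ B_η(0) there exists T > 0 such that φ(x,T) ∈ B_η(0). -/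
open Filter Metric Set
open scoped Topology

lemma HasDerivWithinAt.eventually_lt_of_neg {g : ℝ → ℝ} {g' τ : ℝ}
    (hg : HasDerivWithinAt g g' (Ici τ) τ) (hneg : g' < 0) : ∀ᶠ t in 𝓝[>] τ, g t < g τ := by
  filter_upwards [hg.Ioi_of_Ici.limsup_slope_le' (lt_irrefl τ) hneg, self_mem_nhdsWithin]
    with t hslope (ht : τ < t)
  rwa [slope_def_field, div_lt_iff₀ (sub_pos.2 ht), zero_mul, sub_neg] at hslope

section LieDeriv

variable {n : ℕ} {V : EuclideanSpace ℝ (Fin n) → ℝ}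
  {f : EuclideanSpace ℝ (Fin n) → EuclideanSpace ℝ (Fin n)} {c : ℝ → EuclideanSpace ℝ (Fin n)}

lemma lieDeriv_eq_fderiv (x : EuclideanSpace ℝ (Fin n)) : lieDeriv V f x = fderiv ℝ V x (f x) := by
  rw [lieDeriv, gradient, InnerProductSpace.toDual_symm_apply]

lemma HasDerivWithinAt.lieDeriv_comp {s : Set ℝ} {t : ℝ} (hV : DifferentiableAt ℝ V (c t))
    (hc : HasDerivWithinAt c (f (c t)) s t) :
    HasDerivWithinAt (fun t ↦ V (c t)) (lieDeriv V f (c t)) s t := by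
  rw [lieDeriv_eq_fderiv]
  exact hV.hasFDerivAt.comp_hasDerivWithinAt t hc

variable {t₀ : ℝ} (hV : Differentiable ℝ V)
  (hc : ∀ t, t₀ ≤ t → HasDerivWithinAt c (f (c t)) (Ici t₀) t)
include hV hc

lemma le_add_mul_of_lieDeriv_le {C t : ℝ} (ht : t₀ ≤ t)
    (hle : ∀ s ∈ Ico t₀ t, lieDeriv V f (c s) ≤ C) :
    V (c t) ≤ V (c t₀) + C * (t - t₀) := by
  have hVc : ∀ s, t₀ ≤ s → HasDerivWithinAt (fun s ↦ V (c s)) (lieDeriv V f (c s)) (Ici t₀) s :=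
    fun s hs ↦ (hc s hs).lieDeriv_comp (hV _)
  have hB : ∀ s, HasDerivAt (fun s ↦ V (c t₀) + C * (s - t₀)) C s := fun s ↦ by
    simpa using (((hasDerivAt_id s).sub_const t₀).const_mul C).const_add (V (c t₀))
  refine image_le_of_deriv_right_le_deriv_boundary
    (fun s hs ↦ (hVc s hs.1).continuousWithinAt.mono Icc_subset_Ici_self)
    (fun s hs ↦ (hVc s hs.1).mono (Ici_subset_Ici.2 hs.1)) (by simp)
    (fun s _ ↦ (hB s).continuousAt.continuousWithinAt) (fun s _ ↦ (hB s).hasDerivWithinAt)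
    hle ⟨ht, le_rfl⟩

lemma forall_mem_sublevel_of_lieDeriv_neg {D : Set (EuclideanSpace ℝ (Fin n))} {γ : ℝ}
    (hD : IsClosed D) (hsub : {y ∈ D | V y ≤ γ} ⊆ interior D) (h₀ : c t₀ ∈ {y ∈ D | V y ≤ γ})
    (hneg : ∀ t, t₀ ≤ t → c t ∈ {y ∈ D | V y ≤ γ} → lieDeriv V f (c t) < 0) :
    ∀ t, t₀ ≤ t → c t ∈ {y ∈ D | V y ≤ γ} := by
  intro t ht
  have hclosed : IsClosed (c ⁻¹' {y ∈ D | V y ≤ γ} ∩ Icc t₀ t) := by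
    rw [inter_comm]
    exact ContinuousOn.preimage_isClosed_of_isClosed
      (fun s hs ↦ (hc s hs.1).continuousWithinAt.mono Icc_subset_Ici_self) isClosed_Icc
      (hD.inter (isClosed_le hV.continuous continuous_const))
  refine hclosed.Icc_subset_of_forall_mem_nhdsWithin h₀ (fun τ ⟨hτ, hτt⟩ ↦ ?_) ⟨ht, le_rfl⟩
  have hcτ : HasDerivWithinAt c (f (c τ)) (Ici τ) τ := (hc τ hτt.1).mono (Ici_subset_Ici.2 hτt.1)
  have hdecr : ∀ᶠ s in 𝓝[>] τ, V (c s) < V (c τ) :=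
    (hcτ.lieDeriv_comp (hV _)).eventually_lt_of_neg (hneg τ hτt.1 hτ)
  have hinD : ∀ᶠ s in 𝓝[>] τ, c s ∈ interior D :=
    hcτ.Ioi_of_Ici.continuousWithinAt.eventually_mem (isOpen_interior.mem_nhds (hsub hτ))
  filter_upwards [hdecr, hinD] with s hs hsD
  exact ⟨interior_subset hsD, hs.le.trans hτ.2⟩

end LieDeriv

theorem donut_reaches_ball_general {n : ℕ}
    (f : EuclideanSpace ℝ (Fin n) → EuclideanSpace ℝ (Fin n))
    (φ : EuclideanSpace ℝ (Fin n) → ℝ → EuclideanSpace ℝ (Fin n))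
    (hφ0 : ∀ x, φ x 0 = x)
    (hφd : ∀ x t, 0 ≤ t → HasDerivWithinAt (φ x) (f (φ x t)) (Set.Ici 0) t)
    (D : Set (EuclideanSpace ℝ (Fin n))) (hD : IsCompact D)
    (V : EuclideanSpace ℝ (Fin n) → ℝ)
    (hV : ContDiff ℝ 1 V)
    (γ₁ γ₂ η ε a : ℝ) (hε : 0 < ε) (ha : 0 < a)
    (hthick : Metric.thickening ε {y ∈ D | V y ≤ γ₁} ⊆ Metric.ball 0 η)
    (hsub : {y ∈ D | V y ≤ γ₂} ⊆ interior D)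
    (hdec : ∀ x ∈ D, γ₁ < V x → lieDeriv V f x < -a) :
    ∀ x ∈ {y ∈ D | V y ≤ γ₂} \ Metric.ball (0 : EuclideanSpace ℝ (Fin n)) η,
      ∃ T > 0, φ x T ∈ Metric.ball (0 : EuclideanSpace ℝ (Fin n)) η := by
  rintro x ⟨hx, hxη⟩
  by_contra! hmiss
  have hout : ∀ t, 0 ≤ t → φ x t ∉ ball 0 η := fun t ht ↦
    ht.eq_or_lt.elim (fun h ↦ by rwa [← h, hφ0]) (hmiss t)
  have hlow : ∀ y ∈ {y ∈ D | V y ≤ γ₂}, y ∉ ball 0 η → γ₁ < V y := fun y hy hyη ↦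
    lt_of_not_ge fun hle ↦ hyη (hthick (self_subset_thickening hε _ ⟨hy.1, hle⟩))
  have hdecφ : ∀ t, 0 ≤ t → φ x t ∈ {y ∈ D | V y ≤ γ₂} → lieDeriv V f (φ x t) < -a :=
    fun t ht hmem ↦ hdec _ hmem.1 (hlow _ hmem (hout t ht))
  have hV' : Differentiable ℝ V := hV.differentiable one_ne_zero
  have hstay := forall_mem_sublevel_of_lieDeriv_neg hV' (hφd x) hD.isClosed hsub
    (by rwa [hφ0]) fun t ht hmem ↦ (hdecφ t ht hmem).trans (neg_neg_of_pos ha)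
  set T := (V x - γ₁) / a
  have hT : 0 ≤ T := div_nonneg (sub_nonneg.2 (hlow x hx hxη).le) ha.le
  have hdrop := le_add_mul_of_lieDeriv_le (C := -a) hV' (hφd x) hT
    fun t ht ↦ (hdecφ t ht.1 (hstay t ht.1)).le
  have hT_spent : -a * (T - 0) = γ₁ - V x := by
    rw [sub_zero, neg_mul, mul_div_cancel₀ _ ha.ne']
    ring
  rw [hφ0, hT_spent] at hdrop
  linarith [hlow _ (hstay T hT) (hout T hT)]

/-- "Donut" Lyapunov condition: every trajectory starting in
`{y ∈ D : V(y) ≤ γ₂} \ B_η(0)` enters the ball `B_η(0)`. -/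
theorem donut_reaches_ball {n : ℕ}
    (f : EuclideanSpace ℝ (Fin n) → EuclideanSpace ℝ (Fin n))
    (hf : ContDiff ℝ 1 f) (hf0 : f 0 = 0)
    (φ : EuclideanSpace ℝ (Fin n) → ℝ → EuclideanSpace ℝ (Fin n))
    (hφ0 : ∀ x, φ x 0 = x)
    (hφC : ContDiffOn ℝ 1 (fun p : EuclideanSpace ℝ (Fin n) × ℝ => φ p.1 p.2)
      (Set.univ ×ˢ Set.Ici (0 : ℝ)))
    (hφd : ∀ x t, 0 ≤ t → HasDerivWithinAt (φ x) (f (φ x t)) (Set.Ici 0) t)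
    (hsemi : ∀ x t s, 0 ≤ t → 0 ≤ s → φ (φ x t) s = φ x (t + s))
    (D : Set (EuclideanSpace ℝ (Fin n))) (hD : IsCompact D)
    (V : EuclideanSpace ℝ (Fin n) → ℝ)
    (hV : ContDiff ℝ 1 V)
    (γ₁ γ₂ η ε a : ℝ) (hγ : γ₁ < γ₂) (hη : 0 < η) (hε : 0 < ε) (ha : 0 < a)
    (hthick : Metric.thickening ε {y ∈ D | V y ≤ γ₁} ⊆ Metric.ball 0 η)
    (hsub : {y ∈ D | V y ≤ γ₂} ⊆ interior D)
    (hdec : ∀ x ∈ D, γ₁ < V x → lieDeriv V f x < -a) :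
    ∀ x ∈ {y ∈ D | V y ≤ γ₂} \ Metric.ball (0 : EuclideanSpace ℝ (Fin n)) η,
      ∃ T > 0, φ x T ∈ Metric.ball (0 : EuclideanSpace ℝ (Fin n)) η :=
  donut_reaches_ball_general f φ hφ0 hφd D hD V hV γ₁ γ₂ η ε a hε ha hthick hsub hdec
end
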